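/- Let D be a strongly connected balanced bipartite digraph of order 2a with partite sets X and Y whose underlying graph UG(D) is not 2-connected, say V(D) = A ∪ B ∪ {u} with A, B nonempty and disjoint, u ∉ A ∪ B, and no arcs between A and B. Then there exist vertices x ∈ A and y ∈ B forming a dominating pair with common out-neighbour u, and this pair satisfies d(x) + d(y) ≤ 2a + 2. -/

import Mathlib

open Finset

variable {V : Type*}

/-- Total degree (out-degree plus in-degree) of `x` in the digraph with arc relation `A`. -/
noncomputable def deg (A : V → V → Prop) (x : V) : ℕ :=
  Set.ncard {y | A x y} + Set.ncard {y | A y x}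

/-- The digraph with arc relation `A` is strongly connected. -/
def StrongConn (A : V → V → Prop) : Prop :=
  ∀ u v : V, Relation.ReflTransGen A u v

/-- `{x, y}` is a dominating pair: distinct vertices with a common out-neighbour. -/
def DomPair (A : V → V → Prop) (x y : V) : Prop :=
  x ≠ y ∧ ∃ z, A x z ∧ A y z

/-- `X, Y` is a bipartition of the digraph `A`: the two parts partition the vertex
set and every arc joins the two parts. -/
def IsBipartition (A : V → V → Prop) (X Y : Set V) : Prop :=
  Disjoint X Y ∧ X ∪ Y = Set.univ ∧
    ∀ u v, A u v → (u ∈ X ∧ v ∈ Y) ∨ (u ∈ Y ∧ v ∈ X)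

/-
A path from `A` to `B`, which exists by strong connectivity, must leave `A`, and since there are
no arcs between `A` and `B` it can only do so through the cut vertex `u`; this gives `x ∈ A` with
`x → u`, and symmetrically `y ∈ B` with `y → u`. Both `x` and `y` lie in the part opposite to `u`,
so all their neighbours lie in the part `P ∋ u`, which has `a` vertices; moreover the neighbours of
`x` lie in `(P ∩ A) ∪ {u}` and those of `y` in `(P ∩ B) ∪ {u}`. Counting in- and out-neighbours
separately, `d(x) + d(y) ≤ 2 (|P ∩ A| + 1) + 2 (|P ∩ B| + 1) = 2 (|P| - 1) + 4 = 2a + 2`.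
-/

theorem Relation.ReflTransGen.exists_rel_mem_notMem {r : V → V → Prop} {S : Set V} {v w : V}
    (h : Relation.ReflTransGen r v w) (hv : v ∈ S) (hw : w ∉ S) :
    ∃ p ∈ S, ∃ q ∉ S, r p q := by
  by_contra! hclosed
  exact hw (h.rec hv fun _ hpq hp => hclosed _ hp _ |>.mtr hpq)

def NoArcsBetween (Arc : V → V → Prop) (A B : Set V) : Prop :=
  ∀ x ∈ A, ∀ y ∈ B, ¬ Arc x y ∧ ¬ Arc y x

theorem NoArcsBetween.symm {Arc : V → V → Prop} {A B : Set V} (h : NoArcsBetween Arc A B) :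
    NoArcsBetween Arc B A :=
  fun y hy x hx => (h x hx y hy).symm

section CutVertex

variable {Arc : V → V → Prop} {A B : Set V} {u : V}

theorem NoArcsBetween.mem_insert_of_arc (h : NoArcsBetween Arc A B)
    (hcover : A ∪ B ∪ {u} = Set.univ) {x z : V} (hx : x ∈ A) (hxz : Arc x z ∨ Arc z x) :
    z ∈ insert u A := by
  have hz : z ∈ A ∪ B ∪ {u} := hcover ▸ Set.mem_univ z
  rcases hz with (hzA | hzB) | rfl
  · exact Or.inr hzA
  · exact absurd hxz (not_or.mpr (h x hx z hzB))
  · exact Or.inl rfl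

theorem StrongConn.exists_arc_to_cut_vertex (hstrong : StrongConn Arc) (hA : A.Nonempty)
    (hB : B.Nonempty) (hdisj : Disjoint A B) (hcover : A ∪ B ∪ {u} = Set.univ)
    (hnoarc : NoArcsBetween Arc A B) :
    ∃ x ∈ A, Arc x u := by
  obtain ⟨v, hv⟩ := hA
  obtain ⟨w, hw⟩ := hB
  obtain ⟨x, hx, z, hz, hxz⟩ :=
    (hstrong v w).exists_rel_mem_notMem hv (Set.disjoint_right.mp hdisj hw)
  have hzu : z = u := by
    simpa [hz] using hnoarc.mem_insert_of_arc hcover hx (Or.inl hxz)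
  exact ⟨x, hx, hzu ▸ hxz⟩

theorem ncard_inter_add_ncard_inter_add_one [Finite V] {P : Set V} (huP : u ∈ P)
    (hdisj : Disjoint A B) (hu : u ∉ A ∪ B) (hcover : A ∪ B ∪ {u} = Set.univ) :
    (P ∩ A).ncard + (P ∩ B).ncard + 1 = P.ncard := by
  have hsplit : P ∩ A ∪ P ∩ B = P \ {u} := by
    have hcompl : A ∪ B = {u}ᶜ := eq_compl_iff_isCompl.mpr
      ⟨Set.disjoint_singleton_right.mpr hu, codisjoint_iff.mpr hcover⟩
    rw [← Set.inter_union_distrib_left, hcompl, Set.sdiff_eq]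
  rw [← Set.ncard_union_eq (hdisj.mono Set.inter_subset_right Set.inter_subset_right), hsplit,
    Set.ncard_sdiff_singleton_add_one huP]

end CutVertex

theorem deg_le_two_mul_ncard [Finite V] {Arc : V → V → Prop} {x : V} {S : Set V}
    (hS : ∀ z, Arc x z ∨ Arc z x → z ∈ S) :
    deg Arc x ≤ 2 * S.ncard := by
  have hout : {z | Arc x z}.ncard ≤ S.ncard :=
    Set.ncard_le_ncard (fun z hz => hS z (Or.inl hz))
  have hin : {z | Arc z x}.ncard ≤ S.ncard :=
    Set.ncard_le_ncard (fun z hz => hS z (Or.inr hz))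
  unfold deg
  omega

namespace IsBipartition

variable {Arc : V → V → Prop} {X Y : Set V}

theorem symm (h : IsBipartition Arc X Y) : IsBipartition Arc Y X := by
  obtain ⟨hdisj, hcover, harc⟩ := h
  exact ⟨hdisj.symm, Set.union_comm X Y ▸ hcover, fun v w hvw => (harc v w hvw).symm⟩

theorem mem_right_of_mem_left (h : IsBipartition Arc X Y) {v w : V} (hvw : Arc v w ∨ Arc w v)
    (hv : v ∈ X) : w ∈ Y := by
  obtain ⟨hdisj, -, harc⟩ := h
  rcases hvw with hvw | hwv
  · rcases harc v w hvw with ⟨-, hw⟩ | ⟨hvY, -⟩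
    exacts [hw, absurd hvY (Set.disjoint_left.mp hdisj hv)]
  · rcases harc w v hwv with ⟨-, hvY⟩ | ⟨hw, -⟩
    exacts [absurd hvY (Set.disjoint_left.mp hdisj hv), hw]

theorem mem_of_arc_of_arc (h : IsBipartition Arc X Y) {x u z : V} (hxu : Arc x u)
    (huX : u ∈ X) (hxz : Arc x z ∨ Arc z x) : z ∈ X := by
  have hxY : x ∈ Y := h.mem_right_of_mem_left (Or.inr hxu) huX
  exact h.symm.mem_right_of_mem_left hxz hxY

theorem exists_part_mem_of_arc (h : IsBipartition Arc X Y) {a : ℕ} (hX : X.ncard = a)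
    (hY : Y.ncard = a) (u : V) :
    ∃ P : Set V, P.ncard = a ∧ u ∈ P ∧ ∀ x z, Arc x u → Arc x z ∨ Arc z x → z ∈ P := by
  have hu : u ∈ X ∪ Y := h.2.1 ▸ Set.mem_univ u
  rcases hu with huX | huY
  · exact ⟨X, hX, huX, fun _ _ hxu => h.mem_of_arc_of_arc hxu huX⟩
  · exact ⟨Y, hY, huY, fun _ _ hxu => h.symm.mem_of_arc_of_arc hxu huY⟩

end IsBipartition

theorem stmt19_general [Fintype V] (Arc : V → V → Prop) (X Y : Set V) (a : ℕ)
    (hX : X.ncard = a) (hY : Y.ncard = a) (hbip : IsBipartition Arc X Y)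
    (hstrong : StrongConn Arc)
    (A B : Set V) (u : V) (hA : A.Nonempty) (hB : B.Nonempty)
    (hdisj : Disjoint A B) (hu : u ∉ A ∪ B) (hcover : A ∪ B ∪ {u} = Set.univ)
    (hnoarc : ∀ x ∈ A, ∀ y ∈ B, ¬ Arc x y ∧ ¬ Arc y x) :
    ∃ x ∈ A, ∃ y ∈ B, Arc x u ∧ Arc y u ∧ DomPair Arc x y ∧
      deg Arc x + deg Arc y ≤ 2 * a + 2 := by
  have hnoarc : NoArcsBetween Arc A B := hnoarc
  have hcover' : B ∪ A ∪ {u} = Set.univ := Set.union_comm A B ▸ hcover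
  obtain ⟨x, hx, hxu⟩ := hstrong.exists_arc_to_cut_vertex hA hB hdisj hcover hnoarc
  obtain ⟨y, hy, hyu⟩ := hstrong.exists_arc_to_cut_vertex hB hA hdisj.symm hcover' hnoarc.symm
  have hxy : x ≠ y := fun h => Set.disjoint_left.mp hdisj hx (h ▸ hy)
  refine ⟨x, hx, y, hy, hxu, hyu, ⟨hxy, u, hxu, hyu⟩, ?_⟩
  obtain ⟨P, hPa, huP, hP⟩ := hbip.exists_part_mem_of_arc hX hY u
  have hdegx : deg Arc x ≤ 2 * (insert u (P ∩ A)).ncard := deg_le_two_mul_ncard fun z hz => by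
    rcases hnoarc.mem_insert_of_arc hcover hx hz with rfl | hzA
    exacts [Or.inl rfl, Or.inr ⟨hP x z hxu hz, hzA⟩]
  have hdegy : deg Arc y ≤ 2 * (insert u (P ∩ B)).ncard := deg_le_two_mul_ncard fun z hz => by
    rcases hnoarc.symm.mem_insert_of_arc hcover' hy hz with rfl | hzB
    exacts [Or.inl rfl, Or.inr ⟨hP y z hyu hz, hzB⟩]
  have hcount := ncard_inter_add_ncard_inter_add_one huP hdisj hu hcover
  rw [Set.ncard_insert_of_notMem (fun h => hu (Or.inl h.2))] at hdegx
  rw [Set.ncard_insert_of_notMem (fun h => hu (Or.inr h.2))] at hdegy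
  omega

/-- If `UG(D)` is separated by a vertex `u`, with `V(D) = A ∪ B ∪ {u}` and no arcs
between `A` and `B`, then some `x ∈ A`, `y ∈ B` form a dominating pair with common
out-neighbour `u` and `d(x) + d(y) ≤ 2a + 2`. -/
theorem stmt19 [Fintype V] (Arc : V → V → Prop) (X Y : Set V) (a : ℕ) (ha : 2 ≤ a)
    (hX : X.ncard = a) (hY : Y.ncard = a) (hbip : IsBipartition Arc X Y)
    (hstrong : StrongConn Arc)
    (A B : Set V) (u : V) (hA : A.Nonempty) (hB : B.Nonempty)
    (hdisj : Disjoint A B) (hu : u ∉ A ∪ B) (hcover : A ∪ B ∪ {u} = Set.univ)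
    (hnoarc : ∀ x ∈ A, ∀ y ∈ B, ¬ Arc x y ∧ ¬ Arc y x) :
    ∃ x ∈ A, ∃ y ∈ B, Arc x u ∧ Arc y u ∧ DomPair Arc x y ∧
      deg Arc x + deg Arc y ≤ 2 * a + 2 :=
  stmt19_general Arc X Y a hX hY hbip hstrong A B u hA hB hdisj hu hcover hnoarc
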